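/- Suppose Y : ℝ → ℝ satisfies Y' = -Y² + α. Then y = Y² satisfies the fifth-order KdV travelling-wave equation y'''' - 20yy'' - 10(y')² + 40y³ - 56α²y + 16α³ = 0. -/

import Mathlib

/-!
Along a solution of an autonomous polynomial ODE `Y' = q(Y)`, differentiating `p(Y)` amounts to
applying the derivation `p ↦ p' q` of the polynomial ring. Hence every derivative of `y = Y²` is a
polynomial in `Y` (for the Riccati equation `q = α - X²`), and the fifth-order KdV equation
becomes a polynomial identity in `Y`.
-/

open Polynomial

section AutonomousPolynomialODE

variable {𝕜 : Type*} [NontriviallyNormedField 𝕜] {Y : 𝕜 → 𝕜} {q : 𝕜[X]}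

noncomputable def derivAlong (q : 𝕜[X]) (p : 𝕜[X]) : 𝕜[X] :=
  derivative p * q

theorem hasDerivAt_eval_comp_of_deriv_eq_eval (hY : Differentiable 𝕜 Y)
    (hq : ∀ z, deriv Y z = q.eval (Y z)) (p : 𝕜[X]) (z : 𝕜) :
    HasDerivAt (fun z => p.eval (Y z)) ((derivAlong q p).eval (Y z)) z := by
  have hYz : HasDerivAt Y (q.eval (Y z)) z := hq z ▸ (hY z).hasDerivAt
  rw [derivAlong, eval_mul]
  exact (p.hasDerivAt (Y z)).comp z hYz

theorem iterate_deriv_eval_comp_of_deriv_eq_eval (hY : Differentiable 𝕜 Y)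
    (hq : ∀ z, deriv Y z = q.eval (Y z)) (n : ℕ) (p : 𝕜[X]) :
    deriv^[n] (fun z => p.eval (Y z)) = fun z => ((derivAlong q)^[n] p).eval (Y z) := by
  induction n generalizing p with
  | zero => rfl
  | succ n ih =>
    have hderiv : deriv (fun z => p.eval (Y z)) = fun z => (derivAlong q p).eval (Y z) :=
      funext fun z => (hasDerivAt_eval_comp_of_deriv_eq_eval hY hq p z).deriv
    rw [Function.iterate_succ_apply, hderiv, ih, Function.iterate_succ_apply]

end AutonomousPolynomialODE

/-- If `Y` solves the Riccati equation, then `y = Y²` solves the fifth-order KdV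
travelling-wave equation `y'''' - 20yy'' - 10(y')² + 40y³ - 56α²y + 16α³ = 0`. -/
theorem riccati_sq_solves_kdv5 (Y : ℝ → ℝ) (α : ℝ)
    (hY : Differentiable ℝ Y)
    (hRic : ∀ z, deriv Y z = -(Y z) ^ 2 + α)
    (y : ℝ → ℝ) (hydef : y = fun z => (Y z) ^ 2) :
    ∀ z, deriv (deriv (deriv (deriv y))) z
      - 20 * y z * deriv (deriv y) z
      - 10 * (deriv y z) ^ 2
      + 40 * (y z) ^ 3 - 56 * α ^ 2 * y z + 16 * α ^ 3 = 0 := by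
  have hq : ∀ z, deriv Y z = (C α - X ^ 2 : ℝ[X]).eval (Y z) := by
    simp [hRic, neg_add_eq_sub]
  have hy : y = fun z => (X ^ 2 : ℝ[X]).eval (Y z) := by simp [hydef]
  have hiter := iterate_deriv_eval_comp_of_deriv_eq_eval hY hq
  intro z
  change deriv^[4] y z - 20 * y z * deriv^[2] y z - 10 * (deriv^[1] y z) ^ 2
    + 40 * (y z) ^ 3 - 56 * α ^ 2 * y z + 16 * α ^ 3 = 0
  simp only [hy, hiter, Function.iterate_succ_apply', Function.iterate_zero_apply, derivAlong]
  simp only [derivative_mul, derivative_add, derivative_sub, derivative_C, derivative_X_pow,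
    derivative_zero, eval_mul, eval_add, eval_sub, eval_C, eval_pow, eval_X, eval_zero]
  ring
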